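/- Let σ be a tgd applicable to CQ query Q via key-based atoms: every atom p_i(Ȳ_i, Z̄_i) added by the chase step has Ȳ_i a superkey of P_i, and P_i is set-valued on all databases satisfying Σ. Then the chase step Q ⇒^σ Q' is sound under bag semantics: for every bag-valued database D ⊨ Σ, Q(D,B) = Q'(D,B) as multisets. -/

import Mathlib

/-!
Restricting an assignment to the variables of `Q` is a weight-preserving bijection from the
satisfying assignments of the chase result onto those of `Q`. Every satisfying assignment of `Q`
extends because `D` satisfies `σ`; the extension is unique because the universal positions of each
new atom form a superkey; and the new atoms contribute multiplicity `1` because their relations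
are sets.
-/

/-- A relational schema: a type of relation symbols with arities. -/
structure Schema where
  Rel : Type
  ar : Rel → ℕ

/-- A relational atom over schema `S`; variables are natural numbers. -/
structure Atom (S : Schema) where
  rel : S.Rel
  args : Fin (S.ar rel) → ℕ

/-- A conjunctive query: a head (list of variables) and a body (list of atoms). -/
structure CQ (S : Schema) where
  hd : List ℕ
  body : List (Atom S)

variable {S : Schema} {Dom : Type}

def Atom.rename (f : ℕ → ℕ) (a : Atom S) : Atom S := ⟨a.rel, f ∘ a.args⟩

def CQ.rename (f : ℕ → ℕ) (Q : CQ S) : CQ S := ⟨Q.hd.map f, Q.body.map (Atom.rename f)⟩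

/-- The variables of a query. -/
def CQ.vars (Q : CQ S) : Set ℕ := {x | x ∈ Q.hd ∨ ∃ a ∈ Q.body, ∃ i, a.args i = x}

/-- A bag-valued database: a finite multiset of tuples for each relation symbol. -/
abbrev DB (S : Schema) (Dom : Type) := (r : S.Rel) → Multiset (Fin (S.ar r) → Dom)

/-- A set-valued database: every relation is a set. -/
def IsSetDB (D : DB S Dom) : Prop := ∀ r, (D r).Nodup

/-- An assignment satisfies a list of atoms. -/
def Sat (D : DB S Dom) (body : List (Atom S)) (γ : ℕ → Dom) : Prop :=
  ∀ a ∈ body, (γ ∘ a.args) ∈ D a.rel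

/-- Bag-semantics weight of an assignment: product of multiplicities of matched tuples. -/
noncomputable def weight (D : DB S Dom) (Q : CQ S) (γ : ℕ → Dom) : ℕ :=
  (Q.body.map fun (a : Atom S) =>
    letI : DecidableEq (Fin (S.ar a.rel) → Dom) := Classical.decEq _
    (D a.rel).count (γ ∘ a.args)).prod

/-- Canonical assignments: everything outside the query's variables is a default value. -/
def Canon [Inhabited Dom] (Q : CQ S) (γ : ℕ → Dom) : Prop := ∀ x, x ∉ Q.vars → γ x = default

/-- Bag semantics: multiplicity of the tuple `t` in `Q(D, B)`. -/
noncomputable def bagMult [Inhabited Dom] (D : DB S Dom) (Q : CQ S) (t : List Dom) : ℕ :=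
  ∑ᶠ γ ∈ {γ : ℕ → Dom | Canon Q γ ∧ Q.hd.map γ = t}, weight D Q γ

/-- Bag-set semantics: multiplicity of `t` in `Q(D, BS)`: one per satisfying assignment. -/
noncomputable def bsMult [Inhabited Dom] (D : DB S Dom) (Q : CQ S) (t : List Dom) : ℕ :=
  Nat.card {γ : ℕ → Dom // Canon Q γ ∧ Sat D Q.body γ ∧ Q.hd.map γ = t}

/-- Set semantics: the set of tuples returned by `Q` on `D`. -/
def setAns (D : DB S Dom) (Q : CQ S) : Set (List Dom) :=
  {t | ∃ γ : ℕ → Dom, Sat D Q.body γ ∧ Q.hd.map γ = t}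

/-- Query isomorphism: a bijective variable renaming preserving head and body (as multiset). -/
def CQIso (Q1 Q2 : CQ S) : Prop :=
  ∃ e : ℕ ≃ ℕ, Q1.hd.map ⇑e = Q2.hd ∧
    Multiset.map (Atom.rename ⇑e) (Q1.body : Multiset (Atom S)) = (Q2.body : Multiset (Atom S))

/-- A tuple-generating dependency (tgd) `φ → ∃ Z̄ ψ`: left-hand side atoms, right-hand
side atoms, and a finite set of existentially quantified variables. -/
structure TGD (S : Schema) where
  lhs : List (Atom S)
  rhs : List (Atom S)
  exVars : Finset ℕ

/-- An equality-generating dependency (egd) `φ → eq1 = eq2`. -/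
structure EGD (S : Schema) where
  lhs : List (Atom S)
  eq1 : ℕ
  eq2 : ℕ

/-- An embedded dependency: a tgd or an egd. -/
inductive Dep (S : Schema) where
  | tgd : TGD S → Dep S
  | egd : EGD S → Dep S

/-- Well-formedness of a tgd: existential variables do not occur on the left-hand side,
and every non-existential variable of the right-hand side occurs on the left-hand side. -/
def TGD.wf (σ : TGD S) : Prop :=
  (∀ a ∈ σ.lhs, ∀ i, a.args i ∉ σ.exVars) ∧
  (∀ a ∈ σ.rhs, ∀ i, a.args i ∉ σ.exVars → ∃ b ∈ σ.lhs, ∃ j, b.args j = a.args i)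

/-- A database satisfies a tgd. -/
def TGDSat (D : DB S Dom) (σ : TGD S) : Prop :=
  ∀ γ : ℕ → Dom, (∀ a ∈ σ.lhs, (γ ∘ a.args) ∈ D a.rel) →
    ∃ γ' : ℕ → Dom, (∀ x, x ∉ σ.exVars → γ' x = γ x) ∧
      ∀ a ∈ σ.rhs, (γ' ∘ a.args) ∈ D a.rel

/-- A database satisfies an egd. -/
def EGDSat (D : DB S Dom) (e : EGD S) : Prop :=
  ∀ γ : ℕ → Dom, (∀ a ∈ e.lhs, (γ ∘ a.args) ∈ D a.rel) → γ e.eq1 = γ e.eq2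

/-- A database satisfies an embedded dependency. -/
def DSat (D : DB S Dom) : Dep S → Prop
  | .tgd σ => TGDSat D σ
  | .egd e => EGDSat D e

/-- A database satisfies a (finite) set of embedded dependencies. -/
def DBSat (D : DB S Dom) (Δ : List (Dep S)) : Prop := ∀ d ∈ Δ, DSat D d

/-- Chase with tgd `σ` is applicable to `Q` via `h`: `h` maps the left-hand side into the
body of `Q` and cannot be extended to a homomorphism of the whole dependency. -/
def TgdApplicable (σ : TGD S) (Q : CQ S) (h : ℕ → ℕ) : Prop :=
  (∀ a ∈ σ.lhs, a.rename h ∈ Q.body) ∧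
  ¬ ∃ h' : ℕ → ℕ, (∀ x, x ∉ σ.exVars → h' x = h x) ∧ ∀ a ∈ σ.rhs, a.rename h' ∈ Q.body

/-- `h'` extends `h` by mapping the existential variables injectively to fresh variables. -/
def FreshExt (σ : TGD S) (Q : CQ S) (h h' : ℕ → ℕ) : Prop :=
  (∀ x, x ∉ σ.exVars → h' x = h x) ∧ Set.InjOn h' ↑σ.exVars ∧
  ∀ z ∈ σ.exVars, h' z ∉ Q.vars

/-- The result of a tgd chase step: conjoin the instantiated right-hand side. -/
def TgdResult (σ : TGD S) (Q : CQ S) (h' : ℕ → ℕ) : CQ S :=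
  ⟨Q.hd, Q.body ++ σ.rhs.map (Atom.rename h')⟩

/-- A chase step with a tgd. -/
def TgdStep (σ : TGD S) (Q Q' : CQ S) : Prop :=
  ∃ h h' : ℕ → ℕ, TgdApplicable σ Q h ∧ FreshExt σ Q h h' ∧ Q' = TgdResult σ Q h'

/-- A chase step with an egd: identify the two variables it equates. -/
def EgdStep (e : EGD S) (Q Q' : CQ S) : Prop :=
  ∃ h : ℕ → ℕ, (∀ a ∈ e.lhs, a.rename h ∈ Q.body) ∧ h e.eq1 ≠ h e.eq2 ∧
    (Q' = Q.rename (fun x => if x = h e.eq1 then h e.eq2 else x) ∨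
     Q' = Q.rename (fun x => if x = h e.eq2 then h e.eq1 else x))

/-- A chase step with an embedded dependency. -/
def DepStep : Dep S → CQ S → CQ S → Prop
  | .tgd σ => TgdStep σ
  | .egd e => EgdStep e

/-- A (set-semantics) chase step using some dependency from `Δ`. -/
def SetChaseStep (Δ : List (Dep S)) (Q Q' : CQ S) : Prop := ∃ d ∈ Δ, DepStep d Q Q'

/-- A query is a terminal result of set-semantics chase: no chase step applies. -/
def SetTerminal (Δ : List (Dep S)) (Q : CQ S) : Prop := ¬ ∃ Q', SetChaseStep Δ Q Q'

/-- An atom uses variable `v`. -/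
def Atom.uses (a : Atom S) (v : ℕ) : Prop := ∃ i, a.args i = v

/-- Variable `v` occurs in the body of `Q`. -/
def Occurs (v : ℕ) (Q : CQ S) : Prop := ∃ a ∈ Q.body, a.uses v

/-- All variables of a tgd. -/
def TGD.varSet (σ : TGD S) : Set ℕ :=
  {x | (∃ a ∈ σ.lhs, a.uses x) ∨ (∃ a ∈ σ.rhs, a.uses x) ∨ x ∈ σ.exVars}

/-- A regularized tgd: its right-hand side admits no nonshared partition into two nonempty
parts (i.e., parts sharing no existential variable). -/
def Regularized (σ : TGD S) : Prop :=
  ¬ ∃ l1 l2 : List (Atom S), l1 ≠ [] ∧ l2 ≠ [] ∧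
      ((l1 ++ l2 : List (Atom S)) : Multiset (Atom S)) = (σ.rhs : Multiset (Atom S)) ∧
      ∀ v ∈ σ.exVars, ¬ ((∃ a ∈ l1, a.uses v) ∧ (∃ a ∈ l2, a.uses v))

/-- A pair of fresh extensions of `h` with pairwise distinct fresh images (two disjoint
copies of fresh existential variables). -/
def FreshPair (σ : TGD S) (Q : CQ S) (h h1 h2 : ℕ → ℕ) : Prop :=
  FreshExt σ Q h h1 ∧ FreshExt σ Q h h2 ∧
  ∀ z ∈ σ.exVars, ∀ z' ∈ σ.exVars, h1 z ≠ h2 z'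

/-- The associated test query `Q^{σ,h,θ}`: the body of `Q` conjoined with two copies of the
right-hand side of `σ`, instantiated with two disjoint families of fresh variables. -/
def testQuery (σ : TGD S) (Q : CQ S) (h1 h2 : ℕ → ℕ) : CQ S :=
  ⟨Q.hd, Q.body ++ σ.rhs.map (Atom.rename h1) ++ σ.rhs.map (Atom.rename h2)⟩

/-- `σ` is assignment-fixing w.r.t. `Q` and `h`: in every terminal set-chase result of the
associated test query, at most one of the two fresh copies of each existential variable
still occurs. -/
def AssignmentFixing (Δ : List (Dep S)) (σ : TGD S) (Q : CQ S) (h : ℕ → ℕ) : Prop :=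
  ∀ h1 h2 : ℕ → ℕ, FreshPair σ Q h h1 h2 →
    ∀ R : CQ S, Relation.ReflTransGen (SetChaseStep Δ) (testQuery σ Q h1 h2) R →
      SetTerminal Δ R → ∀ z ∈ σ.exVars, ¬ (Occurs (h1 z) R ∧ Occurs (h2 z) R)

/-- A set `K` of attribute positions of relation `r` is a superkey of `r` with respect to
the dependencies `Δ`: on every database satisfying `Δ`, two tuples of `r` agreeing on the
positions in  are equal. -/
def Superkey (Dom : Type) (Δ : List (Dep S)) (r : S.Rel) (K : Set (Fin (S.ar r))) : Prop :=
  ∀ D : DB S Dom, DBSat D Δ →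
    ∀ t1 ∈ D r, ∀ t2 ∈ D r, (∀ i ∈ K, t1 i = t2 i) → t1 = t2

open Classical in
noncomputable def CQ.canonize [Inhabited Dom] (Q : CQ S) (γ : ℕ → Dom) : ℕ → Dom :=
  fun x => if x ∈ Q.vars then γ x else default

def satAssignments [Inhabited Dom] (D : DB S Dom) (Q : CQ S) (t : List Dom) : Set (ℕ → Dom) :=
  {γ | Canon Q γ ∧ Sat D Q.body γ ∧ Q.hd.map γ = t}

section Assignments

variable {D : DB S Dom}

theorem CQ.mem_vars_of_mem_hd {Q : CQ S} {x : ℕ} (hx : x ∈ Q.hd) : x ∈ Q.vars := Or.inl hx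

theorem CQ.mem_vars_of_mem_body {Q : CQ S} {a : Atom S} (ha : a ∈ Q.body)
    (i : Fin (S.ar a.rel)) : a.args i ∈ Q.vars :=
  Or.inr ⟨a, ha, i, rfl⟩

theorem sat_congr {body : List (Atom S)} {γ₁ γ₂ : ℕ → Dom}
    (h : ∀ a ∈ body, ∀ i, γ₁ (a.args i) = γ₂ (a.args i)) : Sat D body γ₁ ↔ Sat D body γ₂ := by
  refine forall₂_congr fun a ha => ?_
  rw [show γ₁ ∘ a.args = γ₂ ∘ a.args from funext (h a ha)]

theorem sat_append {l₁ l₂ : List (Atom S)} {γ : ℕ → Dom} :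
    Sat D (l₁ ++ l₂) γ ↔ Sat D l₁ γ ∧ Sat D l₂ γ :=
  List.forall_mem_append

theorem sat_map_rename {l : List (Atom S)} {f : ℕ → ℕ} {γ : ℕ → Dom} :
    Sat D (l.map (Atom.rename f)) γ ↔ Sat D l (γ ∘ f) :=
  List.forall_mem_map

theorem weight_congr {Q : CQ S} {γ₁ γ₂ : ℕ → Dom}
    (h : ∀ a ∈ Q.body, ∀ i, γ₁ (a.args i) = γ₂ (a.args i)) : weight D Q γ₁ = weight D Q γ₂ := by
  unfold weight
  congr 1
  refine List.map_congr_left fun a ha => ?_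
  simp only [show γ₁ ∘ a.args = γ₂ ∘ a.args from funext (h a ha)]

theorem sat_of_weight_ne_zero {Q : CQ S} {γ : ℕ → Dom} (hw : weight D Q γ ≠ 0) :
    Sat D Q.body γ := by
  classical
  intro a ha
  by_contra hmem
  refine hw (List.prod_eq_zero (List.mem_map.2 ⟨a, ha, ?_⟩))
  simpa [Multiset.count_eq_zero] using hmem

theorem weight_eq_one {Q : CQ S} {γ : ℕ → Dom} (hsat : Sat D Q.body γ)
    (hset : ∀ a ∈ Q.body, (D a.rel).Nodup) : weight D Q γ = 1 := by
  classical
  refine List.prod_eq_one fun n hn => ?_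
  obtain ⟨a, ha, rfl⟩ := List.mem_map.1 hn
  convert Multiset.count_eq_one_of_mem (hset a ha) (hsat a ha)

theorem weight_tgdResult (σ : TGD S) (Q : CQ S) (h' : ℕ → ℕ) (γ : ℕ → Dom) :
    weight D (TgdResult σ Q h') γ =
      weight D Q γ * weight D ⟨Q.hd, σ.rhs.map (Atom.rename h')⟩ γ :=
  (congrArg List.prod (List.map_append ..)).trans List.prod_append

variable [Inhabited Dom]

theorem CQ.canonize_of_mem (Q : CQ S) (γ : ℕ → Dom) {x : ℕ} (hx : x ∈ Q.vars) :
    Q.canonize γ x = γ x :=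
  if_pos hx

theorem CQ.canonize_of_not_mem (Q : CQ S) (γ : ℕ → Dom) {x : ℕ} (hx : x ∉ Q.vars) :
    Q.canonize γ x = default :=
  if_neg hx

theorem CQ.canon_canonize (Q : CQ S) (γ : ℕ → Dom) : Canon Q (Q.canonize γ) :=
  fun _ => Q.canonize_of_not_mem γ

theorem CQ.canonize_congr {Q : CQ S} {γ₁ γ₂ : ℕ → Dom} (h : ∀ x ∈ Q.vars, γ₁ x = γ₂ x) :
    Q.canonize γ₁ = Q.canonize γ₂ := by
  funext x
  by_cases hx : x ∈ Q.vars
  · rw [Q.canonize_of_mem _ hx, Q.canonize_of_mem _ hx, h x hx]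
  · rw [Q.canonize_of_not_mem _ hx, Q.canonize_of_not_mem _ hx]

theorem CQ.canonize_eq_self {Q : CQ S} {γ : ℕ → Dom} (hγ : Canon Q γ) : Q.canonize γ = γ := by
  funext x
  by_cases hx : x ∈ Q.vars
  · exact Q.canonize_of_mem γ hx
  · rw [Q.canonize_of_not_mem γ hx, hγ x hx]

theorem CQ.canonize_canonize_of_subset {Q Q' : CQ S} (hQ : Q.vars ⊆ Q'.vars) (γ : ℕ → Dom) :
    Q.canonize (Q'.canonize γ) = Q.canonize γ :=
  CQ.canonize_congr fun _ hx => Q'.canonize_of_mem γ (hQ hx)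

theorem CQ.map_hd_canonize (Q : CQ S) (γ : ℕ → Dom) : Q.hd.map (Q.canonize γ) = Q.hd.map γ :=
  List.map_congr_left fun _ hx => Q.canonize_of_mem γ (Q.mem_vars_of_mem_hd hx)

theorem CQ.sat_canonize {Q : CQ S} {γ : ℕ → Dom} : Sat D Q.body (Q.canonize γ) ↔ Sat D Q.body γ :=
  sat_congr fun _ ha i => Q.canonize_of_mem γ (Q.mem_vars_of_mem_body ha i)

theorem CQ.weight_canonize (Q : CQ S) (γ : ℕ → Dom) : weight D Q (Q.canonize γ) = weight D Q γ :=
  weight_congr fun _ ha i => Q.canonize_of_mem γ (Q.mem_vars_of_mem_body ha i)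

theorem bagMult_eq_finsum_satAssignments (D : DB S Dom) (Q : CQ S) (t : List Dom) :
    bagMult D Q t = ∑ᶠ γ ∈ satAssignments D Q t, weight D Q γ :=
  finsum_mem_inter_support_eq' _ _ _ fun _ hw =>
    ⟨fun ⟨hc, ht⟩ => ⟨hc, sat_of_weight_ne_zero hw, ht⟩, fun ⟨hc, _, ht⟩ => ⟨hc, ht⟩⟩

theorem canonize_mapsTo_satAssignments {Q Q' : CQ S} (hhd : Q'.hd = Q.hd)
    (hbody : Q.body ⊆ Q'.body) (t : List Dom) :
    Set.MapsTo Q.canonize (satAssignments D Q' t) (satAssignments D Q t) := by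
  rintro γ ⟨-, hs, ht⟩
  refine ⟨Q.canon_canonize γ, Q.sat_canonize.2 fun a ha => hs a (hbody ha), ?_⟩
  rw [Q.map_hd_canonize, ← hhd, ht]

end Assignments

section TgdStep

variable {σ : TGD S} {Q : CQ S} {h h' : ℕ → ℕ}

theorem mem_vars_tgdResult {x : ℕ} :
    x ∈ (TgdResult σ Q h').vars ↔ x ∈ Q.vars ∨ ∃ a ∈ σ.rhs, ∃ i, h' (a.args i) = x := by
  simp only [TgdResult, CQ.vars, Set.mem_ofPred_eq, List.mem_append, List.mem_map]
  constructor
  · rintro (hx | ⟨a, ha | ⟨b, hb, rfl⟩, i, rfl⟩)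
    · exact Or.inl (Or.inl hx)
    · exact Or.inl (Or.inr ⟨a, ha, i, rfl⟩)
    · exact Or.inr ⟨b, hb, i, rfl⟩
  · rintro ((hx | ⟨a, ha, i, rfl⟩) | ⟨b, hb, i, rfl⟩)
    · exact Or.inl hx
    · exact Or.inr ⟨a, Or.inl ha, i, rfl⟩
    · exact Or.inr ⟨b.rename h', Or.inr ⟨b, hb, rfl⟩, i, rfl⟩

theorem vars_subset_tgdResult : Q.vars ⊆ (TgdResult σ Q h').vars :=
  fun _ hx => mem_vars_tgdResult.2 (Or.inl hx)

theorem TGD.wf.apply_universal_mem_vars (hwf : σ.wf) (hlhs : ∀ a ∈ σ.lhs, a.rename h ∈ Q.body)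
    {a : Atom S} (ha : a ∈ σ.rhs) {i : Fin (S.ar a.rel)} (hi : a.args i ∉ σ.exVars) :
    h (a.args i) ∈ Q.vars := by
  obtain ⟨b, hb, j, hj⟩ := hwf.2 a ha i hi
  rw [← hj]
  exact Q.mem_vars_of_mem_body (hlhs b hb) j

variable {D : DB S Dom}

theorem exists_sat_tgdResult_extension (hwf : σ.wf) (hlhs : ∀ a ∈ σ.lhs, a.rename h ∈ Q.body)
    (hfr : FreshExt σ Q h h') (hσ : TGDSat D σ) {γ : ℕ → Dom} (hγ : Sat D Q.body γ) :
    ∃ γ' : ℕ → Dom, (∀ x ∈ Q.vars, γ' x = γ x) ∧ Sat D (TgdResult σ Q h').body γ' := by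
  classical
  obtain ⟨δ, hδ, hδrhs⟩ := hσ (γ ∘ h) fun a ha => hγ _ (hlhs a ha)
  -- `h'` is injective on the existential variables, so their fresh images can carry `δ`.
  let ex : Set ℕ := σ.exVars
  let γ' : ℕ → Dom := fun x =>
    if x ∈ Q.vars then γ x else Function.extend (ex.domRestrict h') (ex.domRestrict δ) γ x
  have hγ'Q : ∀ x ∈ Q.vars, γ' x = γ x := fun x hx => if_pos hx
  have hγ'rhs : ∀ a ∈ σ.rhs, ∀ i, γ' (h' (a.args i)) = δ (a.args i) := by
    intro a ha i
    by_cases hz : a.args i ∈ σ.exVars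
    · rw [show γ' (h' (a.args i)) = _ from if_neg (hfr.2.2 _ hz)]
      exact hfr.2.1.injective.extend_apply _ _ ⟨_, hz⟩
    · rw [hfr.1 _ hz, hγ'Q _ (hwf.apply_universal_mem_vars hlhs ha hz), hδ _ hz]
      rfl
  refine ⟨γ', hγ'Q, sat_append.2 ⟨?_, sat_map_rename.2 ?_⟩⟩
  · exact (sat_congr fun a ha i => hγ'Q _ (Q.mem_vars_of_mem_body ha i)).2 hγ
  · exact (sat_congr hγ'rhs).2 hδrhs

variable [Inhabited Dom] {Δ : List (Dep S)} {t : List Dom}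

theorem canonize_injOn_tgdResult (hwf : σ.wf) (hlhs : ∀ a ∈ σ.lhs, a.rename h ∈ Q.body)
    (hext : ∀ x, x ∉ σ.exVars → h' x = h x)
    (hkey : ∀ a ∈ σ.rhs, Superkey Dom Δ a.rel {i | a.args i ∉ σ.exVars}) (hD : DBSat D Δ) :
    Set.InjOn Q.canonize (satAssignments D (TgdResult σ Q h') t) := by
  rintro γ₁ ⟨hc₁, hs₁, -⟩ γ₂ ⟨hc₂, hs₂, -⟩ heq
  have hQ : ∀ x ∈ Q.vars, γ₁ x = γ₂ x := fun x hx => by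
    simpa only [Q.canonize_of_mem _ hx] using congrFun heq x
  have hrhs : ∀ a ∈ σ.rhs, (γ₁ ∘ h') ∘ a.args = (γ₂ ∘ h') ∘ a.args := fun a ha =>
    hkey a ha D hD _ (sat_map_rename.1 (sat_append.1 hs₁).2 a ha)
      _ (sat_map_rename.1 (sat_append.1 hs₂).2 a ha) fun j hj => by
        simp only [Function.comp_apply, hext _ hj]
        exact hQ _ (hwf.apply_universal_mem_vars hlhs ha hj)
  funext x
  by_cases hx : x ∈ (TgdResult σ Q h').vars
  · rcases mem_vars_tgdResult.1 hx with hx | ⟨a, ha, i, rfl⟩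
    · exact hQ x hx
    · exact congrFun (hrhs a ha) i
  · rw [hc₁ x hx, hc₂ x hx]

theorem canonize_surjOn_tgdResult (hwf : σ.wf) (hlhs : ∀ a ∈ σ.lhs, a.rename h ∈ Q.body)
    (hfr : FreshExt σ Q h h') (hσ : TGDSat D σ) :
    Set.SurjOn Q.canonize (satAssignments D (TgdResult σ Q h') t) (satAssignments D Q t) := by
  rintro γ ⟨hc, hs, ht⟩
  obtain ⟨γ', hγ'Q, hγ'⟩ := exists_sat_tgdResult_extension hwf hlhs hfr hσ hs
  let Q' := TgdResult σ Q h'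
  have hcongr : Q.canonize γ' = Q.canonize γ := CQ.canonize_congr hγ'Q
  refine ⟨Q'.canonize γ', ⟨Q'.canon_canonize γ', Q'.sat_canonize.2 hγ', ?_⟩, ?_⟩
  · have hhd : Q.hd.map γ' = t := by
      rw [← ht, ← Q.map_hd_canonize γ', hcongr, Q.map_hd_canonize]
    exact (Q'.map_hd_canonize γ').trans hhd
  · rw [CQ.canonize_canonize_of_subset vars_subset_tgdResult, hcongr, CQ.canonize_eq_self hc]

theorem weight_tgdResult_eq_weight_canonize (hset : ∀ a ∈ σ.rhs, (D a.rel).Nodup)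
    {γ : ℕ → Dom} (hs : Sat D (TgdResult σ Q h').body γ) :
    weight D (TgdResult σ Q h') γ = weight D Q (Q.canonize γ) := by
  have hnew : weight D ⟨Q.hd, σ.rhs.map (Atom.rename h')⟩ γ = 1 :=
    weight_eq_one (sat_append.1 hs).2 fun a ha => by
      obtain ⟨b, hb, rfl⟩ := List.mem_map.1 ha
      exact hset b hb
  rw [weight_tgdResult, hnew, mul_one, Q.weight_canonize]

end TgdStep

theorem key_based_chase_step_sound_bag {S : Schema} (Dom : Type) [Inhabited Dom]
    (Δ : List (Dep S)) (σ : TGD S) (hσ : Dep.tgd σ ∈ Δ) (hwf : σ.wf)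
    (Q : CQ S) (h h' : ℕ → ℕ)
    (happ : TgdApplicable σ Q h) (hfr : FreshExt σ Q h h')
    (hkey : ∀ a ∈ σ.rhs, Superkey Dom Δ a.rel {i | a.args i ∉ σ.exVars})
    (hset : ∀ a ∈ σ.rhs, ∀ D : DB S Dom, DBSat D Δ → (D a.rel).Nodup) :
    ∀ D : DB S Dom, DBSat D Δ →
      ∀ t : List Dom, bagMult D Q t = bagMult D (TgdResult σ Q h') t := by
  intro D hD t
  rw [bagMult_eq_finsum_satAssignments, bagMult_eq_finsum_satAssignments]
  refine (finsum_mem_eq_of_bijOn Q.canonize ⟨?_, ?_, ?_⟩ fun γ hγ => ?_).symm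
  · exact canonize_mapsTo_satAssignments (Q := Q) (Q' := TgdResult σ Q h') rfl
      (List.subset_append_left _ _) t
  · exact canonize_injOn_tgdResult hwf happ.1 hfr.1 hkey hD
  · exact canonize_surjOn_tgdResult hwf happ.1 hfr (hD _ hσ)
  · exact weight_tgdResult_eq_weight_canonize (fun a ha => hset a ha D hD) hγ.2.1
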